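/- Let σ > 0, g ≥ 0, γ ∈ ℝ and ℓ(ξ) = √(σ|ξ|³ + g|ξ| + γ²/4). The Fourier multipliers L(D) with symbol ℓ(ξ) and M(D) with symbol ℓ(ξ)|ξ|^{-1} are such that for the linear system ∂_t η + i(γ/2)η + ζ_α = 0, ∂_t ζ + i(γ/2)ζ + iσ η_αα - ig η - (γ²/4)∂_α^{-1}η = 0 restricted to holomorphic functions (Fourier support in ξ ≤ 0), the transformed unknowns (Mη, ζ) satisfy ∂_t(Mη) + i(γ/2)(Mη) - iL(D)ζ = 0 and ∂_t ζ - iL(D)(Mη) + i(γ/2)ζ = 0; i.e., the system is symmetric with equal off-diagonal operators -iL(D). -/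

import Mathlib

/-!
On a negative frequency `ξ` one has `|ξ| = -ξ`, so `ℓ(ξ)² = -σξ³ - gξ + γ²/4` and
`M(ξ) = -ℓ(ξ)/ξ`. Hence `M(ξ)·(iξ) = -iℓ(ξ)`, which turns the first equation into the first
symmetric one, and `iℓ(ξ)M(ξ) = -iℓ(ξ)²/ξ = iσξ² + ig + (γ²/4)(iξ)⁻¹`, which is exactly the
coefficient of `η` in the second equation.
-/

noncomputable section

/-- The symbol `ℓ(ξ) = √(σ|ξ|³ + g|ξ| + γ²/4)` of the operator `L(D)`. -/
def ellSymbol (σ g γ ξ : ℝ) : ℝ := Real.sqrt (σ * |ξ| ^ 3 + g * |ξ| + γ ^ 2 / 4)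

/-- The symbol of `M(D) = L(D)|D|⁻¹`. -/
def mSymbol (σ g γ ξ : ℝ) : ℝ := ellSymbol σ g γ ξ / |ξ|

open Complex

section NegativeFrequency

variable {σ g γ ξ : ℝ}

theorem ellSymbol_sq_of_neg (hσ : 0 ≤ σ) (hg : 0 ≤ g) (hξ : ξ < 0) :
    ellSymbol σ g γ ξ ^ 2 = -(σ * ξ ^ 3) - g * ξ + γ ^ 2 / 4 := by
  rw [ellSymbol, Real.sq_sqrt (by positivity), abs_of_neg hξ]
  ring

theorem mSymbol_of_neg (hξ : ξ < 0) : mSymbol σ g γ ξ = -(ellSymbol σ g γ ξ / ξ) := by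
  rw [mSymbol, abs_of_neg hξ, div_neg]

theorem mSymbol_mul_I_mul_of_neg (hξ : ξ < 0) :
    (mSymbol σ g γ ξ : ℂ) * (I * ξ) = -(I * ellSymbol σ g γ ξ) := by
  have hξ0 : (ξ : ℂ) ≠ 0 := ofReal_ne_zero.mpr hξ.ne
  rw [mSymbol_of_neg hξ]
  push_cast
  field_simp

theorem I_mul_ellSymbol_mul_mSymbol_of_neg (hσ : 0 ≤ σ) (hg : 0 ≤ g) (hξ : ξ < 0) :
    I * ellSymbol σ g γ ξ * mSymbol σ g γ ξ =
      I * σ * ξ ^ 2 + I * g + (γ : ℂ) ^ 2 / 4 * (I * ξ)⁻¹ := by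
  have hξ0 : (ξ : ℂ) ≠ 0 := ofReal_ne_zero.mpr hξ.ne
  have hℓsq : (ellSymbol σ g γ ξ : ℂ) ^ 2 = -(σ * ξ ^ 3) - g * ξ + (γ : ℂ) ^ 2 / 4 := by
    exact_mod_cast congrArg ((↑) : ℝ → ℂ) (ellSymbol_sq_of_neg hσ hg hξ)
  rw [mSymbol_of_neg hξ, mul_inv, inv_I]
  push_cast
  field_simp
  linear_combination -4 * hℓsq

end NegativeFrequency

/-- Symmetrization of the linear system
`∂_t η + i(γ/2)η + ζ_α = 0`,
`∂_t ζ + i(γ/2)ζ + iσ η_αα - ig η - (γ²/4)∂_α^{-1} η = 0`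
restricted to holomorphic functions, stated on each negative frequency
`ξ < 0` (where `ζ_α` has symbol `iξ`, `η_αα` has symbol `(iξ)² = -ξ²` and
`∂_α^{-1}` has symbol `(iξ)⁻¹`): the transformed unknowns `(M(ξ)η, ζ)`
satisfy the symmetric system with equal off-diagonal operators `-iL`, i.e.
`∂_t(Mη) + i(γ/2)(Mη) - iℓ(ξ)ζ = 0` and `∂_t ζ - iℓ(ξ)(Mη) + i(γ/2)ζ = 0`. -/
theorem linear_system_symmetrization (σ g γ ξ : ℝ)
    (hσ : 0 < σ) (hg : 0 ≤ g) (hξ : ξ < 0) (η ζ : ℝ → ℂ)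
    (hη : ∀ t : ℝ, HasDerivAt η
        (-(Complex.I * ((γ : ℂ) / 2)) * η t - Complex.I * (ξ : ℂ) * ζ t) t)
    (hζ : ∀ t : ℝ, HasDerivAt ζ
        (-(Complex.I * ((γ : ℂ) / 2)) * ζ t + Complex.I * (σ : ℂ) * (ξ : ℂ) ^ 2 * η t
          + Complex.I * (g : ℂ) * η t
          + ((γ : ℂ) ^ 2 / 4) * (Complex.I * (ξ : ℂ))⁻¹ * η t) t) :
    (∀ t : ℝ, HasDerivAt (fun s => (mSymbol σ g γ ξ : ℂ) * η s)
        (-(Complex.I * ((γ : ℂ) / 2)) * ((mSymbol σ g γ ξ : ℂ) * η t)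
          + Complex.I * (ellSymbol σ g γ ξ : ℂ) * ζ t) t) ∧
    (∀ t : ℝ, HasDerivAt ζ
        (Complex.I * (ellSymbol σ g γ ξ : ℂ) * ((mSymbol σ g γ ξ : ℂ) * η t)
          - Complex.I * ((γ : ℂ) / 2) * ζ t) t) := by
  refine ⟨fun t => ((hη t).const_mul _).congr_deriv ?_, fun t => (hζ t).congr_deriv ?_⟩
  · linear_combination -ζ t * mSymbol_mul_I_mul_of_neg (σ := σ) (g := g) (γ := γ) hξ
  · linear_combination -η t * I_mul_ellSymbol_mul_mSymbol_of_neg (γ := γ) hσ.le hg hξ
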